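/- Let k ≥ 3 and r be positive integers with r < k, let p = (p_1,…,p_k) be a tuple of non-negative integers, let a ∈ {2,3,…,k−1} and D ⊆ [a−2]. Define K_{i,j} and 𝔖_{k,a} as follows: K_{i,i} = ∅ if i∈[a−2]∖D, K_{i,i} = [k] if i∈D∪{a−1}, K_{i,j} = ]i,j] for i∈{a−1,…,k−1}, j∈[k], (i,j) ≠ (a−1,a−1); 𝔖_{k,a} is the set of permutations π of [k] with π(i)=i for all i∈[a−2]. For a surjection f:[k−1]→[r], π∈𝔖_{k,a} and j∈[k−1], set H_{f,π,j} = ∪ { K_{i,π(i)} : i∈[k−1]∖{j}, f(i)=f(j) }. Then Σ sgn(π) = 0, where the sum is over all triples (S,f,π) with S∈S_{p,r}, f a surjection from [k−1] onto [r], and π∈𝔖_{k,a}, satisfying K_{i,π(i)} ⊆ S_{f(i)} for every i∈[k−1] and additionally f(a−1) ≠ f(a) and a ∈ H_{f,π,a−1}. -/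

import Mathlib

open Finset

/-- The cyclic interval `]i,j]` of `[k] = {1,…,k}`, realized inside `ZMod k`
(the element `k` of `[k]` is represented by `0 : ZMod k`). -/
def cyc (k : ℕ) [NeZero k] (i j : ZMod k) : Finset (ZMod k) :=
  Finset.univ.filter fun x => 1 ≤ (x - i).val ∧ (x - i).val ≤ (j - i).val

/-- Membership in `𝒮_{p,r}` : each `j ∈ [k]` belongs to exactly `p j` of the sets `S_1,…,S_r`. -/
def SprMem (k r : ℕ) [NeZero k] (p : ZMod k → ℕ) (S : Fin r → Finset (ZMod k)) : Prop :=
  ∀ j : ZMod k, Nat.card {i : Fin r // j ∈ S i} = p j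

/-- Membership in `ℳ_{p,r}` : member of `𝒮_{p,r}` all of whose sets are proper subsets of `[k]`. -/
def MprMem (k r : ℕ) [NeZero k] (p : ZMod k → ℕ) (S : Fin r → Finset (ZMod k)) : Prop :=
  SprMem k r p S ∧ ∀ i, S i ≠ Finset.univ

/-- `|ℳ_{p,r}|`. -/
noncomputable def Mcard (k r : ℕ) [NeZero k] (p : ZMod k → ℕ) : ℕ :=
  Nat.card {S : Fin r → Finset (ZMod k) // MprMem k r p S}

/-- `|𝒮_{p,r}|`. -/
noncomputable def Scard (k r : ℕ) [NeZero k] (p : ZMod k → ℕ) : ℕ :=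
  Nat.card {S : Fin r → Finset (ZMod k) // SprMem k r p S}

/-- `|ℳ_{q,r}|` for an integer-valued tuple `q` (empty if some entry of `q` is negative). -/
noncomputable def McardZ (k r : ℕ) [NeZero k] (q : ZMod k → ℤ) : ℕ :=
  Nat.card {S : Fin r → Finset (ZMod k) //
    (∀ j : ZMod k, (Nat.card {i : Fin r // j ∈ S i} : ℤ) = q j) ∧ ∀ i, S i ≠ Finset.univ}

/-- `alphaRel k S i j` holds iff `j = α(i,S)`. -/
def alphaRel (k : ℕ) [NeZero k] (S : Finset (ZMod k)) (i j : ZMod k) : Prop :=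
  if S = Finset.univ then j = i else j ∉ S ∧ cyc k i (j - 1) ⊆ S

/-- `betaRel k S i j` holds iff `j = β(i,S)`. -/
def betaRel (k : ℕ) [NeZero k] (S : Finset (ZMod k)) (i j : ZMod k) : Prop :=
  if S = Finset.univ then j = i else j + 1 ∉ S ∧ cyc k i j ⊆ S

/-- `gammaRel k S i j` holds iff `j = γ(i,S)`. -/
def gammaRel (k : ℕ) [NeZero k] (S : Finset (ZMod k)) (i j : ZMod k) : Prop :=
  if S = Finset.univ then j = i
  else if i ∈ S then j = i - 1
  else j + 1 ∉ S ∧ cyc k i j ⊆ S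

/-- The digraph on `[k]` with the `k-1` arcs `(i, ζ(i, S_{f i}))` for `i ∈ [k-1]`
(the nonzero elements of `ZMod k`) is a tree, i.e. a spanning tree oriented toward
the root `k` (represented by `0`): following the arcs from any vertex reaches the root. -/
def GIsTree (k r : ℕ) [NeZero k] (zeta : Finset (ZMod k) → ZMod k → ZMod k → Prop)
    (S : Fin r → Finset (ZMod k)) (f : {i : ZMod k // i ≠ 0} → Fin r) : Prop :=
  ∃ g : ZMod k → ZMod k, g 0 = 0 ∧
    (∀ i : {i : ZMod k // i ≠ 0}, zeta (S (f i)) i.1 (g i.1)) ∧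
    ∀ x : ZMod k, ∃ n : ℕ, g^[n] x = 0

/-- Sample space: pairs of a tuple `S ∈ ℳ_{p,r}` and a surjection `f : [k-1] → [r]`,
with the uniform probability measure. -/
abbrev OmM (k r : ℕ) [NeZero k] (p : ZMod k → ℕ) : Type :=
  {om : (Fin r → Finset (ZMod k)) × ({i : ZMod k // i ≠ 0} → Fin r) //
    MprMem k r p om.1 ∧ Function.Surjective om.2}

/-- Sample space `Ω`: pairs of a tuple `S ∈ 𝒮_{p,r}` and a surjection `f : [k-1] → [r]`,
with the uniform probability measure. -/
abbrev OmS (k r : ℕ) [NeZero k] (p : ZMod k → ℕ) : Type :=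
  {om : (Fin r → Finset (ZMod k)) × ({i : ZMod k // i ≠ 0} → Fin r) //
    SprMem k r p om.1 ∧ Function.Surjective om.2}

/-- Uniform probability of an event `A` in a (finite) sample space `Om`. -/
noncomputable def PrU {Om : Type} (A : Set Om) : ℚ :=
  (Nat.card A : ℚ) / (Nat.card Om : ℚ)

/-- The `Pr`-determinant of a `k × k` matrix of events (rows and columns indexed by
`[k]`, i.e. by `ZMod k`). -/
noncomputable def Pdet {k : ℕ} [NeZero k] {Om : Type} (E : ZMod k → ZMod k → Set Om) : ℚ :=
  ∑ pi : Equiv.Perm (ZMod k), ((Equiv.Perm.sign pi : ℤ) : ℚ) * PrU (⋂ i : ZMod k, E i (pi i))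

/-- The matrix of events `M_α`: `M_{α,i,j} = I^{f(i)}_{i,j}` for `i ∈ [k-1]`, and the
row of `i = k` (i.e. `0`) is constant equal to `Ω`. -/
def Malpha (k r : ℕ) [NeZero k] (p : ZMod k → ℕ) (i j : ZMod k) : Set (OmS k r p) :=
  {om : OmS k r p | ∀ hi : i ≠ 0, cyc k i j ⊆ om.1.1 (om.1.2 ⟨i, hi⟩)}

/-- The matrix of events `M_β`: `M_{β,i,j} = J^{f(i)}_{i,j+1}` for `i ∈ [k-1]`, and the
row of `i = k` (i.e. `0`) is constant equal to `Ω`. -/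
def Mbeta (k r : ℕ) [NeZero k] (p : ZMod k → ℕ) (i j : ZMod k) : Set (OmS k r p) :=
  {om : OmS k r p | ∀ hi : i ≠ 0,
    if i = j + 1 then om.1.1 (om.1.2 ⟨i, hi⟩) = Finset.univ
    else cyc k i (j + 1) ⊆ om.1.1 (om.1.2 ⟨i, hi⟩)}

/-- Membership of `om` in the event `J^{f(i)}_{a,b}`. -/
def Jmem (k r : ℕ) [NeZero k] (p : ZMod k → ℕ) (om : OmS k r p)
    (i : {i : ZMod k // i ≠ 0}) (a b : ZMod k) : Prop :=
  if a = b then om.1.1 (om.1.2 i) = Finset.univ else cyc k a b ⊆ om.1.1 (om.1.2 i)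

/-- The sets `K_{i,j}` of Section 5.1 (for given `a ∈ {2,…,k-1}` and `D ⊆ [a-2]`):
`K_{i,i} = ∅` for `i ∈ [a-2] ∖ D`, `K_{i,i} = [k]` for `i ∈ D ∪ {a-1}`, and
`K_{i,j} = ]i,j]` for `i ∈ {a-1,…,k-1}`, `j ∈ [k]`, `(i,j) ≠ (a-1,a-1)`.
(The element `m ∈ [k]` is represented by `(m : ZMod k)`, so `i = a-1` means
`i.val + 1 = a`.) -/
def Kset (k a : ℕ) [NeZero k] (D : Finset (ZMod k)) (i j : ZMod k) : Finset (ZMod k) :=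
  if i = j then (if i.val + 1 = a ∨ i ∈ D then Finset.univ else ∅) else cyc k i j

/-- `H_{f,π,j} = ∪ { K_{i,π(i)} : i ∈ [k-1] ∖ {j}, f(i) = f(j) }`. -/
def Hset (k a r : ℕ) [NeZero k] (D : Finset (ZMod k))
    (f : {i : ZMod k // i ≠ 0} → Fin r) (pi : Equiv.Perm (ZMod k))
    (j : {i : ZMod k // i ≠ 0}) : Finset (ZMod k) :=
  (Finset.univ.filter fun i : {i : ZMod k // i ≠ 0} => i ≠ j ∧ f i = f j).biUnion
    (fun i => Kset k a D i.1 (pi i.1))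

/-!
Sign-reversing involution. Write `m = a-1` and `t` for the partner of `(S,f,π)`: `t = k` if
`S_{f(m)} = [k]`, and otherwise a (canonically chosen) witness of `a ∈ H_{f,π,m}`, i.e. `t ≠ m`
with `f t = f m` and `a ∈ K_{t,π(t)}`. Replacing `π` by `π ∘ (m t)` preserves all the conditions
and the partner, and flips the sign. In the second case the point is that `]t,π t]` passes through
`m` and `m+1`, and `]m,π m]` cannot reach back to `t` without `]t,π t] ∪ ]m,π m] = [k]`; so
`]m,π t]` and `]t,π m]` are again contained in `S_{f(m)}`, and the latter still contains `a`.
-/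

namespace ZMod

variable {k : ℕ} [NeZero k]

lemma val_sub_add_val_sub (u v w : ZMod k) :
    (w - v).val + (v - u).val = (w - u).val ∨ (w - v).val + (v - u).val = (w - u).val + k := by
  rw [← sub_add_sub_cancel w v u]
  rcases lt_or_ge ((w - v).val + (v - u).val) k with h | h
  · exact .inl (val_add_of_lt h).symm
  · exact .inr (val_add_val_of_le h)

lemma val_sub_add_val_sub_self {u v : ZMod k} (h : u ≠ v) : (u - v).val + (v - u).val = k := by
  have hne := (val_ne_zero (v - u)).mpr (sub_ne_zero.mpr h.symm)
  have := val_sub_add_val_sub u v u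
  rw [sub_self, val_zero] at this
  omega

lemma val_add_one_sub {i t : ZMod k} (h : i + 1 ≠ t) : (i + 1 - t).val = (i - t).val + 1 := by
  rw [add_sub_right_comm]
  have h1 := val_one'' (nontrivial_iff.mp (nontrivial_of_ne _ _ h))
  rcases lt_or_ge ((i - t).val + (1 : ZMod k).val) k with hlt | hge
  · rw [val_add_of_lt hlt, h1]
  · have := val_add_val_of_le hge
    have := (i - t).val_lt
    have h0 : i - t + 1 = 0 := (val_eq_zero _).mp (by omega)
    rw [← add_sub_right_comm, sub_eq_zero] at h0
    exact absurd h0 h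

end ZMod

open Finset ZMod

section CyclicInterval

variable {k : ℕ} [NeZero k]

lemma mem_cyc {i j x : ZMod k} :
    x ∈ cyc k i j ↔ 1 ≤ (x - i).val ∧ (x - i).val ≤ (j - i).val := by
  simp [cyc]

@[simp] lemma cyc_self (i : ZMod k) : cyc k i i = ∅ := by
  ext x
  simp only [mem_cyc, sub_self, val_zero, notMem_empty, iff_false]
  omega

lemma cyc_union_cyc {u v w : ZMod k} (h : (v - u).val ≤ (w - u).val) :
    cyc k u v ∪ cyc k v w = cyc k u w := by
  ext y
  simp only [mem_union, mem_cyc]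
  have := val_sub_add_val_sub u v y
  have := val_sub_add_val_sub u v w
  have := (y - v).val_lt
  have := (w - v).val_lt
  have := (w - u).val_lt
  omega

lemma cyc_subset_cyc_of_le_left {u v w : ZMod k} (h : (v - u).val ≤ (w - u).val) :
    cyc k u v ⊆ cyc k u w :=
  subset_union_left.trans_eq (cyc_union_cyc h)

lemma cyc_subset_cyc_of_le_right {u v w : ZMod k} (h : (v - u).val ≤ (w - u).val) :
    cyc k v w ⊆ cyc k u w :=
  subset_union_right.trans_eq (cyc_union_cyc h)

lemma cyc_union_cyc_comm {u v : ZMod k} (h : u ≠ v) : cyc k u v ∪ cyc k v u = univ := by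
  ext y
  simp only [mem_union, mem_cyc, mem_univ, iff_true]
  have := val_sub_add_val_sub u v y
  have := val_sub_add_val_sub_self h
  have := (y - u).val_lt
  have := (y - v).val_lt
  have := (v - u).val_lt
  have := (val_ne_zero (v - u)).mpr (sub_ne_zero.mpr h.symm)
  omega

lemma add_one_mem_cyc {i j : ZMod k} (h : j ≠ i) : i + 1 ∈ cyc k i j := by
  have := (val_ne_zero (j - i)).mpr (sub_ne_zero.mpr h)
  rw [mem_cyc, add_sub_cancel_left, val_one'' (nontrivial_iff.mp (nontrivial_of_ne _ _ h))]
  omega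

lemma add_one_notMem_cyc (t i : ZMod k) : i + 1 ∉ cyc k t i := by
  rw [mem_cyc]
  by_cases h : i + 1 = t
  · simp [h]
  · rw [val_add_one_sub h]
    omega

lemma cyc_exchange {S : Finset (ZMod k)} {m t s s' : ZMod k} (hS : S ≠ univ) (htm : t ≠ m)
    (hs' : s' ≠ m) (hmem : m + 1 ∈ cyc k t s) (hts : cyc k t s ⊆ S) (hms' : cyc k m s' ⊆ S) :
    cyc k m s ⊆ S ∧ cyc k t s' ⊆ S ∧ m + 1 ∈ cyc k t s' := by
  have hm_le : (m - t).val ≤ (s - t).val := by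
    have hne : m + 1 ≠ t := by
      rintro rfl
      simp [mem_cyc] at hmem
    have := (mem_cyc.mp hmem).2
    rw [val_add_one_sub hne] at this
    omega
  have ht_notMem : t ∉ cyc k m s' := by
    intro ht
    refine hS (univ_subset_iff.mp ?_)
    rw [← cyc_union_cyc_comm htm]
    exact union_subset ((cyc_subset_cyc_of_le_left hm_le).trans hts)
      ((cyc_subset_cyc_of_le_left (mem_cyc.mp ht).2).trans hms')
  have hm_le' : (m - t).val ≤ (s' - t).val := by
    have := val_sub_add_val_sub t m s'
    have := val_sub_add_val_sub_self htm
    have := (val_ne_zero (t - m)).mpr (sub_ne_zero.mpr htm)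
    rw [mem_cyc] at ht_notMem
    omega
  rw [← cyc_union_cyc hm_le']
  exact ⟨(cyc_subset_cyc_of_le_right hm_le).trans hts,
    union_subset ((cyc_subset_cyc_of_le_left hm_le).trans hts) hms',
    mem_union_right _ (add_one_mem_cyc hs')⟩

end CyclicInterval

section Kset

variable {k : ℕ} [NeZero k] {a : ℕ} {D : Finset (ZMod k)}

lemma Kset_of_ne {i j : ZMod k} (h : i ≠ j) : Kset k a D i j = cyc k i j :=
  if_neg h

lemma Kset_self_of_val_add_one {i : ZMod k} (h : i.val + 1 = a) : Kset k a D i i = univ := by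
  rw [Kset, if_pos rfl, if_pos (Or.inl h)]

lemma ne_of_mem_Kset_of_subset {S : Finset (ZMod k)} {x i j : ZMod k} (hS : S ≠ univ)
    (hx : x ∈ Kset k a D i j) (h : Kset k a D i j ⊆ S) : i ≠ j := by
  rintro rfl
  rw [Kset, if_pos rfl] at hx h
  split_ifs at hx h
  · exact hS (univ_subset_iff.mp h)
  · exact notMem_empty _ hx

lemma Kset_exchange {S : Finset (ZMod k)} {m t s s' : ZMod k} (hS : S ≠ univ)
    (hm : Kset k a D m m = univ) (ha : (a : ZMod k) = m + 1) (htm : t ≠ m)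
    (hat : (a : ZMod k) ∈ Kset k a D t s) (hts : Kset k a D t s ⊆ S)
    (hms' : Kset k a D m s' ⊆ S) :
    Kset k a D m s ⊆ S ∧ Kset k a D t s' ⊆ S ∧ (a : ZMod k) ∈ Kset k a D t s' := by
  have hs'm : s' ≠ m := by
    rintro rfl
    exact hS (univ_subset_iff.mp (hm ▸ hms'))
  have hts' : t ≠ s := ne_of_mem_Kset_of_subset hS hat hts
  rw [Kset_of_ne hts', ha] at hat
  rw [Kset_of_ne hts'] at hts
  rw [Kset_of_ne hs'm.symm] at hms'
  obtain ⟨hms, hts'', hat'⟩ := cyc_exchange hS htm hs'm hat hts hms'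
  have hms_ne : m ≠ s := by
    rintro rfl
    exact add_one_notMem_cyc t m hat
  have hts'_ne : t ≠ s' := by
    rintro rfl
    simp at hat'
  rw [Kset_of_ne hms_ne, Kset_of_ne hts'_ne, ha]
  exact ⟨hms, hts'', hat'⟩

end Kset

abbrev Config (k r : ℕ) : Type :=
  (Fin r → Finset (ZMod k)) × ({i : ZMod k // i ≠ 0} → Fin r) × Equiv.Perm (ZMod k)

section Involution

variable {k r : ℕ} [NeZero k] (a : ℕ) (D : Finset (ZMod k)) (m : {i : ZMod k // i ≠ 0})

def IsWitness (f : {i : ZMod k // i ≠ 0} → Fin r) (π : Equiv.Perm (ZMod k)) (j : ZMod k) : Prop :=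
  ∃ hj : j ≠ 0, j ≠ m.1 ∧ f ⟨j, hj⟩ = f m ∧ (a : ZMod k) ∈ Kset k a D j (π j)

lemma exists_isWitness_iff {f : {i : ZMod k // i ≠ 0} → Fin r} {π : Equiv.Perm (ZMod k)} :
    (∃ j, IsWitness a D m f π j) ↔ (a : ZMod k) ∈ Hset k a r D f π m := by
  simp only [IsWitness, Hset, mem_biUnion, mem_filter, mem_univ, true_and]
  constructor
  · rintro ⟨j, hj, hjm, hf, ha⟩
    exact ⟨⟨j, hj⟩, ⟨fun h => hjm (congrArg Subtype.val h), hf⟩, ha⟩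
  · rintro ⟨i, ⟨him, hf⟩, ha⟩
    exact ⟨i.1, i.2, fun h => him (Subtype.ext h), hf, ha⟩

/-- `0` stands for the vertex `k`. The choice depends on `π` only through `IsWitness … π`, which
the swap leaves unchanged; this is what makes `swapPartner` an involution. -/
noncomputable def partner (x : Config k r) : ZMod k :=
  if x.1 (x.2.1 m) = univ then 0 else Classical.epsilon (IsWitness a D m x.2.1 x.2.2)

noncomputable def swapPartner (x : Config k r) : Config k r :=
  (x.1, x.2.1, x.2.2 * Equiv.swap m.1 (partner a D m x))

variable (P : (Fin r → Finset (ZMod k)) → ({i : ZMod k // i ≠ 0} → Fin r) → Prop)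
  (Q : ZMod k → Prop)

def Admissible (x : Config k r) : Prop :=
  P x.1 x.2.1 ∧ (∀ i, Q i → x.2.2 i = i) ∧
    (∀ i : {i : ZMod k // i ≠ 0}, Kset k a D i.1 (x.2.2 i.1) ⊆ x.1 (x.2.1 i)) ∧
    (a : ZMod k) ∈ Hset k a r D x.2.1 x.2.2 m

variable {a D m P Q}

lemma Admissible.mul_swap {S : Fin r → Finset (ZMod k)} {f : {i : ZMod k // i ≠ 0} → Fin r}
    {π : Equiv.Perm (ZMod k)} {t : ZMod k} (hx : Admissible a D m P Q (S, f, π))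
    (hQm : ¬ Q m) (htm : t ≠ m.1) (hQt : ¬ Q t) (hrow_m : Kset k a D m (π t) ⊆ S (f m))
    (hrow_t : ∀ ht : t ≠ 0, Kset k a D t (π m) ⊆ S (f ⟨t, ht⟩))
    (hH : (a : ZMod k) ∈ Hset k a r D f (π * Equiv.swap m.1 t) m) :
    Admissible a D m P Q (S, f, π * Equiv.swap m.1 t) := by
  obtain ⟨hP, hfix, hK, -⟩ := hx
  refine ⟨hP, fun i hi => ?_, fun i => ?_, hH⟩
  · have him : i ≠ m.1 := by
      rintro rfl
      exact hQm hi
    have hit : i ≠ t := by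
      rintro rfl
      exact hQt hi
    simpa only [Equiv.Perm.mul_apply, Equiv.swap_apply_of_ne_of_ne him hit] using hfix i hi
  · by_cases him : i = m
    · subst him
      simpa only [Equiv.Perm.mul_apply, Equiv.swap_apply_left] using hrow_m
    rcases i with ⟨i, hi0⟩
    by_cases hit : i = t
    · subst hit
      simpa only [Equiv.Perm.mul_apply, Equiv.swap_apply_right] using hrow_t hi0
    · have him' : i ≠ m.1 := fun h => him (Subtype.ext h)
      simpa only [Equiv.Perm.mul_apply, Equiv.swap_apply_of_ne_of_ne him' hit] using hK ⟨i, hi0⟩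

lemma Hset_mul_swap_zero (f : {i : ZMod k // i ≠ 0} → Fin r) (π : Equiv.Perm (ZMod k)) :
    Hset k a r D f (π * Equiv.swap m.1 0) m = Hset k a r D f π m := by
  refine biUnion_congr rfl fun i hi => ?_
  have him : i.1 ≠ m.1 := fun h => (mem_filter.mp hi).2.1 (Subtype.ext h)
  rw [Equiv.Perm.mul_apply, Equiv.swap_apply_of_ne_of_ne him i.2]

lemma swapPartner_spec_of_eq_univ {x : Config k r} (hx : Admissible a D m P Q x)
    (hQ0 : ¬ Q 0) (hQm : ¬ Q m) (hU : x.1 (x.2.1 m) = univ) :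
    partner a D m x ≠ m.1 ∧ Admissible a D m P Q (swapPartner a D m x) ∧
      partner a D m (swapPartner a D m x) = partner a D m x := by
  obtain ⟨S, f, π⟩ := x
  dsimp only at hU
  have ht : partner a D m (S, f, π) = 0 := if_pos hU
  refine ⟨ht.trans_ne fun h => m.2 h.symm, ?_, ?_⟩
  · rw [swapPartner, ht]
    refine hx.mul_swap hQm (fun h => m.2 h.symm) hQ0 (hU ▸ subset_univ _)
      (fun h0 => absurd rfl h0) ?_
    rw [Hset_mul_swap_zero]
    exact hx.2.2.2
  · exact (if_pos hU).trans ht.symm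

lemma swapPartner_spec_of_ne_univ {x : Config k r} (hx : Admissible a D m P Q x)
    (hQm : ¬ Q m) (hm : m.1.val + 1 = a) (hU : x.1 (x.2.1 m) ≠ univ) :
    partner a D m x ≠ m.1 ∧ Admissible a D m P Q (swapPartner a D m x) ∧
      partner a D m (swapPartner a D m x) = partner a D m x := by
  obtain ⟨S, f, π⟩ := x
  dsimp only at hU
  set t := partner a D m (S, f, π)
  have ht : t = Classical.epsilon (IsWitness a D m f π) := if_neg hU
  have htW : IsWitness a D m f π t :=
    ht ▸ Classical.epsilon_spec ((exists_isWitness_iff a D m).mpr hx.2.2.2)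
  obtain ⟨ht0, htm, hft, hat⟩ := htW
  have ha : (a : ZMod k) = m.1 + 1 := by
    rw [← hm, Nat.cast_add, ZMod.natCast_zmod_val, Nat.cast_one]
  have hKt : Kset k a D t (π t) ⊆ S (f m) := hft ▸ hx.2.2.1 ⟨t, ht0⟩
  obtain ⟨hrow_m, hrow_t, hat'⟩ :=
    Kset_exchange hU (Kset_self_of_val_add_one hm) ha htm hat hKt (hx.2.2.1 m)
  have hQt : ¬ Q t := fun hq => ne_of_mem_Kset_of_subset hU hat hKt (hx.2.1 t hq).symm
  have hW : IsWitness a D m f (π * Equiv.swap m.1 t) = IsWitness a D m f π := by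
    funext j
    by_cases hjm : j = m.1
    · simp [IsWitness, hjm]
    by_cases hjt : j = t
    · subst hjt
      simp only [IsWitness, Equiv.Perm.mul_apply, Equiv.swap_apply_right, eq_iff_iff]
      exact ⟨fun _ => ⟨ht0, htm, hft, hat⟩, fun _ => ⟨ht0, htm, hft, hat'⟩⟩
    · simp only [IsWitness, Equiv.Perm.mul_apply, Equiv.swap_apply_of_ne_of_ne hjm hjt]
  refine ⟨htm, ?_, ?_⟩
  · refine hx.mul_swap hQm htm hQt hrow_m (fun _ => hft ▸ hrow_t) ?_
    exact (exists_isWitness_iff a D m).mp ⟨t, hW ▸ ⟨ht0, htm, hft, hat⟩⟩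
  · change (if S (f m) = univ then 0 else
      Classical.epsilon (IsWitness a D m f (π * Equiv.swap m.1 t))) = t
    rw [if_neg hU, hW, ht]

lemma swapPartner_spec {x : Config k r} (hx : Admissible a D m P Q x) (hQ0 : ¬ Q 0)
    (hQm : ¬ Q m) (hm : m.1.val + 1 = a) :
    partner a D m x ≠ m.1 ∧ Admissible a D m P Q (swapPartner a D m x) ∧
      partner a D m (swapPartner a D m x) = partner a D m x := by
  by_cases hU : x.1 (x.2.1 m) = univ
  · exact swapPartner_spec_of_eq_univ hx hQ0 hQm hU
  · exact swapPartner_spec_of_ne_univ hx hQm hm hU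

open scoped Classical in
theorem sum_sign_admissible_eq_zero (hQ0 : ¬ Q 0) (hQm : ¬ Q m) (hm : m.1.val + 1 = a) :
    ∑ x ∈ univ.filter (Admissible a D m P Q), (Equiv.Perm.sign x.2.2 : ℤ) = 0 := by
  have spec := fun (x : Config k r) (hx : x ∈ univ.filter (Admissible a D m P Q)) =>
    swapPartner_spec (mem_filter.mp hx).2 hQ0 hQm hm
  refine sum_involution (fun x _ => swapPartner a D m x) (fun x hx => ?_) (fun x hx _ => ?_)
    (fun x hx => mem_filter.mpr ⟨mem_univ _, (spec x hx).2.1⟩) (fun x hx => ?_)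
  · rw [swapPartner, Equiv.Perm.sign_mul, Equiv.Perm.sign_swap (spec x hx).1.symm]
    push_cast
    ring
  · intro h
    have := congrArg (fun y : Config k r => y.2.2) h
    simp only [swapPartner, mul_eq_left, Equiv.swap_eq_one_iff] at this
    exact (spec x hx).1 this.symm
  · rw [swapPartner, (spec x hx).2.2, swapPartner, Equiv.mul_swap_mul_self]

end Involution

open scoped Classical in
theorem signed_sum_Z_general (k r : ℕ) [NeZero k]
    (p : ZMod k → ℕ) (a : ℕ) (ha : 2 ≤ a) (hak : a ≤ k - 1)
    (D : Finset (ZMod k))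
    (am aa : {i : ZMod k // i ≠ 0}) (ham : am.1 = (a : ZMod k) - 1) :
    ∑ x ∈ Finset.univ.filter (fun x : (Fin r → Finset (ZMod k)) ×
          ({i : ZMod k // i ≠ 0} → Fin r) × Equiv.Perm (ZMod k) =>
        SprMem k r p x.1 ∧ Function.Surjective x.2.1 ∧
        (∀ i : ZMod k, 1 ≤ i.val → i.val ≤ a - 2 → x.2.2 i = i) ∧
        (∀ i : {i : ZMod k // i ≠ 0}, Kset k a D i.1 (x.2.2 i.1) ⊆ x.1 (x.2.1 i)) ∧
        x.2.1 am ≠ x.2.1 aa ∧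
        (a : ZMod k) ∈ Hset k a r D x.2.1 x.2.2 am),
      (Equiv.Perm.sign x.2.2 : ℤ) = 0 := by
  have hm : am.1.val + 1 = a := by
    rw [ham, ← Nat.cast_pred (by omega), ZMod.val_cast_of_lt (by omega)]
    omega
  rw [← sum_sign_admissible_eq_zero (a := a) (D := D) (m := am)
    (P := fun S f => SprMem k r p S ∧ Function.Surjective f ∧ f am ≠ f aa)
    (Q := fun i => 1 ≤ i.val ∧ i.val ≤ a - 2) (by simp) (by omega) hm]
  refine sum_congr (filter_congr fun x _ => ?_) fun _ _ => rfl
  simp only [Admissible, and_imp]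
  tauto

open scoped Classical in
/-- Lemma 12 (`Z = 0`): the signed count of triples `(S,f,π)` in `Ω(N^{a,D})` with
`f(a-1) ≠ f(a)` and `a ∈ H_{f,π,a-1}` is zero. Here `am` and `aa` denote the
elements `a-1` and `a` of `[k-1]`. -/
theorem signed_sum_Z (k r : ℕ) [NeZero k] (hk : 3 ≤ k) (hr : 0 < r) (hrk : r < k)
    (p : ZMod k → ℕ) (a : ℕ) (ha : 2 ≤ a) (hak : a ≤ k - 1)
    (D : Finset (ZMod k)) (hD : ∀ i ∈ D, 1 ≤ i.val ∧ i.val ≤ a - 2)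
    (am aa : {i : ZMod k // i ≠ 0}) (ham : am.1 = (a : ZMod k) - 1)
    (haa : aa.1 = (a : ZMod k)) :
    ∑ x ∈ Finset.univ.filter (fun x : (Fin r → Finset (ZMod k)) ×
          ({i : ZMod k // i ≠ 0} → Fin r) × Equiv.Perm (ZMod k) =>
        SprMem k r p x.1 ∧ Function.Surjective x.2.1 ∧
        (∀ i : ZMod k, 1 ≤ i.val → i.val ≤ a - 2 → x.2.2 i = i) ∧
        (∀ i : {i : ZMod k // i ≠ 0}, Kset k a D i.1 (x.2.2 i.1) ⊆ x.1 (x.2.1 i)) ∧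
        x.2.1 am ≠ x.2.1 aa ∧
        (a : ZMod k) ∈ Hset k a r D x.2.1 x.2.2 am),
      (Equiv.Perm.sign x.2.2 : ℤ) = 0 :=
  signed_sum_Z_general k r p a ha hak D am aa ham
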